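/- arXiv:1103.3485 — 5 statements merged into one kernel-verified Lean document; each statement's English description precedes it below -/
import Mathlib

section
/- For any irreducible permutation π of {1,…,d}, the permutation r_b(π) obtained by the Rauzy induction move of type 0 is again irreducible. -/
/-!
Write `t = π(d)` and suppose `σ = r_b(π)` maps `{1,…,k}` into itself, `k < d`. If `k ≤ t`, then
so does `π`: `σ` never lowers a value except at `π⁻¹(d)`, which it sends to `t + 1 > k`.
If `k > t`, then `σ` permutes `{1,…,k}`, so `t = σ(j)` for some `j ≤ k < d`; but the only
preimage of `t` under `σ` is `d`.
-/

theorem Equiv.Perm.surjOn_of_mapsTo {α : Type*} [Finite α] (σ : Equiv.Perm α) {s : Set α}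
    (h : Set.MapsTo σ s s) : Set.SurjOn σ s s :=
  ((Set.toFinite s).injOn_iff_bijOn_of_mapsTo h).mp σ.injective.injOn |>.surjOn

namespace RauzyBottom

/-- `σ = r_b(π)` with `last` in the role of the final position. -/
def IsBottomMove {d : ℕ} (π σ : Equiv.Perm (Fin d)) (last : Fin d) : Prop :=
  ∀ j : Fin d, (σ j).val =
    if (π j).val ≤ (π last).val then (π j).val
    else if (π j).val < d - 1 then (π j).val + 1
    else (π last).val + 1

variable {d : ℕ} {π σ : Equiv.Perm (Fin d)} {last : Fin d} {k : ℕ}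

theorem mapsTo_of_mapsTo_of_le (hσ : IsBottomMove π σ last) (hk : k ≤ (π last).val + 1)
    (h : ∀ i : Fin d, i.val < k → (σ i).val < k) :
    ∀ i : Fin d, i.val < k → (π i).val < k := by
  intro i hi
  have hσi := hσ i
  have := h i hi
  split_ifs at hσi <;> omega

theorem not_mapsTo_of_lt (hσ : IsBottomMove π σ last) (hk : (π last).val + 1 < k)
    (hlast : k ≤ last.val) :
    ¬ ∀ i : Fin d, i.val < k → (σ i).val < k := by
  intro h
  obtain ⟨j, hj, hσj⟩ := σ.surjOn_of_mapsTo (s := {i | i.val < k}) h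
    (show (π last).val < k by omega)
  have hσj' := hσ j
  rw [hσj] at hσj'
  split_ifs at hσj' with hle
  · have : j = last := π.injective (Fin.ext (by omega))
    exact absurd hj (by simp only [this, Set.mem_ofPred_eq]; omega)
  all_goals omega

end RauzyBottom

/-- Indices are 0-based: position `d - 1` plays the role of `d`. -/
theorem rauzy_bottom_irreducible (d : ℕ) (hd : 2 ≤ d) (π σ : Equiv.Perm (Fin d))
    (hirr : ∀ k : ℕ, 1 ≤ k → k < d → ¬ (∀ i : Fin d, i.val < k → (π i).val < k))
    (hσ : ∀ j : Fin d, (σ j).val =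
      if (π j).val ≤ (π ⟨d - 1, by omega⟩).val then (π j).val
      else if (π j).val < d - 1 then (π j).val + 1
      else (π ⟨d - 1, by omega⟩).val + 1) :
    ∀ k : ℕ, 1 ≤ k → k < d → ¬ (∀ i : Fin d, i.val < k → (σ i).val < k) := by
  intro k hk1 hkd hσk
  rcases le_or_gt k ((π ⟨d - 1, by omega⟩).val + 1) with hk | hk
  · exact hirr k hk1 hkd (RauzyBottom.mapsTo_of_mapsTo_of_le hσ hk hσk)
  · exact RauzyBottom.not_mapsTo_of_lt hσ hk (Nat.le_sub_one_of_lt hkd) hσk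
end

section
/- Let π₀, π₁ : 𝒜 → {1,…,d} be bijections and define Ω_{α,β} = [π₁(α) ≤ π₁(β)] − [π₀(α) ≤ π₀(β)] (Iverson brackets, values in {−1,0,1}). If B and C are orbits of the permutation π_𝒜 = π₀⁻¹ ∘ π₁ of 𝒜, then Σ_{α ∈ B, β ∈ C} Ω_{α,β} = 0. In other words, the vertical cycles span an isotropic subspace. -/
/-! The permutation `σ = π₀⁻¹ ∘ π₁` satisfies `π₀ ∘ σ = π₁`, so substituting `(σ a, σ b)` for
`(a, b)` turns the `π₀`-part of the double sum into its `π₁`-part; the substitution is a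
bijection of `B × C` because orbits are `σ`-invariant. -/

namespace Equiv.Perm

variable {ι : Type*} {σ : Perm ι}

theorem apply_mem_iff_of_sameCycle {s : Finset ι} {x : ι} (hs : ∀ y, y ∈ s ↔ σ.SameCycle x y)
    (y : ι) : σ y ∈ s ↔ y ∈ s := by
  rw [hs, hs, sameCycle_apply_right]

theorem sum_comp_of_apply_mem_iff {M : Type*} [AddCommMonoid M] {s : Finset ι}
    (hs : ∀ y, σ y ∈ s ↔ y ∈ s) (f : ι → M) : ∑ y ∈ s, f (σ y) = ∑ y ∈ s, f y :=
  Finset.sum_equiv σ (fun y => (hs y).symm) fun _ _ => rfl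

theorem sum_sum_comp_of_apply_mem_iff {M : Type*} [AddCommMonoid M] {s t : Finset ι}
    (hs : ∀ y, σ y ∈ s ↔ y ∈ s) (ht : ∀ y, σ y ∈ t ↔ y ∈ t) (f : ι → ι → M) :
    ∑ x ∈ s, ∑ y ∈ t, f (σ x) (σ y) = ∑ x ∈ s, ∑ y ∈ t, f x y := by
  simp only [sum_comp_of_apply_mem_iff ht (f _)]
  exact sum_comp_of_apply_mem_iff hs fun x => ∑ y ∈ t, f x y

end Equiv.Perm

open Equiv.Perm in
theorem vertical_cycles_isotropic_general {A : Type*}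
    (d : ℕ) (π₀ π₁ : A ≃ Fin d) (B C : Finset A) (α γ : A)
    (hB : ∀ β, β ∈ B ↔ Equiv.Perm.SameCycle (π₁.trans π₀.symm) α β)
    (hC : ∀ β, β ∈ C ↔ Equiv.Perm.SameCycle (π₁.trans π₀.symm) γ β) :
    ∑ a ∈ B, ∑ b ∈ C,
      ((if (π₁ a).val ≤ (π₁ b).val then (1 : ℤ) else 0) -
       (if (π₀ a).val ≤ (π₀ b).val then (1 : ℤ) else 0)) = 0 := by
  set σ : Equiv.Perm A := π₁.trans π₀.symm
  have hπ : ∀ a, π₀ (σ a) = π₁ a := fun a => by simp [σ]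
  have hreindex : ∑ a ∈ B, ∑ b ∈ C, (if (π₁ a).val ≤ (π₁ b).val then (1 : ℤ) else 0) =
      ∑ a ∈ B, ∑ b ∈ C, (if (π₀ a).val ≤ (π₀ b).val then (1 : ℤ) else 0) := by
    simp only [← hπ]
    exact sum_sum_comp_of_apply_mem_iff (apply_mem_iff_of_sameCycle hB)
      (apply_mem_iff_of_sameCycle hC) fun a b => if (π₀ a).val ≤ (π₀ b).val then 1 else 0
  rw [Finset.sum_congr rfl fun a _ => Finset.sum_sub_distrib .., Finset.sum_sub_distrib, hreindex,
    sub_self]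

/-- Vertical cycles are isotropic: if `B` and `C` are orbits of
`π_𝒜 = π₀⁻¹ ∘ π₁`, then the total intersection number
`Σ_{α∈B, β∈C} Ω_{α,β}` vanishes, where
`Ω_{α,β} = [π₁(α) ≤ π₁(β)] − [π₀(α) ≤ π₀(β)]`. -/
theorem vertical_cycles_isotropic {A : Type*} [Fintype A] [DecidableEq A]
    (d : ℕ) (π₀ π₁ : A ≃ Fin d) (B C : Finset A) (α γ : A)
    (hB : ∀ β, β ∈ B ↔ Equiv.Perm.SameCycle (π₁.trans π₀.symm) α β)
    (hC : ∀ β, β ∈ C ↔ Equiv.Perm.SameCycle (π₁.trans π₀.symm) γ β) :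
    ∑ a ∈ B, ∑ b ∈ C,
      ((if (π₁ a).val ≤ (π₁ b).val then (1 : ℤ) else 0) -
       (if (π₀ a).val ≤ (π₀ b).val then (1 : ℤ) else 0)) = 0 :=
  vertical_cycles_isotropic_general d π₀ π₁ B C α γ hB hC
end

section
/- Let π₀, π₁ : 𝒜 → {1,…,d} be bijections such that π_𝒜 = π₀⁻¹ ∘ π₁ is an involution of 𝒜, and let Ω_{α,β} = [π₁(α) ≤ π₁(β)] − [π₀(α) ≤ π₀(β)]. If {α, β} with α ≠ β is a 2-cycle (transposition) of π_𝒜, then setting v_{α,β} = Ω(e_α + e_β) and v_{α,−β} = Ω(e_α − e_β), the symplectic pairing satisfies ω(v_{α,−β}, v_{α,β}) = 2 Ω_{α,β} = ±2; in particular it is nonzero. -/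
open Matrix

/-!
Since `π_𝒜` swaps `α` and `β`, we have `π₁ α = π₀ β` and `π₁ β = π₀ α`, so in the rows and
columns `α, β` the two orders defining `Ω` are opposite: `Ω_{α,β} = [π₀ β ≤ π₀ α] - [π₀ α ≤ π₀ β]`
is `±1` and `Ω_{β,α} = -Ω_{α,β}`. Together with `Ω_{a,a} = 0`, expanding
`(e_α - e_β)ᵀ Ω (e_α + e_β) = Ω_{α,α} + Ω_{α,β} - Ω_{β,α} - Ω_{β,β}` gives `2 Ω_{α,β}`.
-/

theorem single_sub_single_dotProduct_mulVec_single_add_single {n R : Type*} [Fintype n]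
    [DecidableEq n] [CommRing R] (M : Matrix n n R) (a b : n) :
    (Pi.single a 1 - Pi.single b 1) ⬝ᵥ M *ᵥ (Pi.single a 1 + Pi.single b 1) =
      M a a + M a b - M b a - M b b := by
  simp only [mulVec_add, mulVec_single_one, sub_dotProduct, dotProduct_add,
    single_one_dotProduct, col_apply]
  ring

theorem ite_le_sub_ite_le_eq_one_or_neg_one {ι R : Type*} [LinearOrder ι] [Ring R] {x y : ι}
    (hxy : x ≠ y) :
    ((if y ≤ x then 1 else 0) - (if x ≤ y then 1 else 0) : R) = 1 ∨
      ((if y ≤ x then 1 else 0) - (if x ≤ y then 1 else 0) : R) = -1 := by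
  rcases hxy.lt_or_gt with h | h <;> simp [h.le, h.not_ge]

/-- For a transposition `{α,β}` of the involution `π_𝒜 = π₀⁻¹ ∘ π₁`, the
symplectic pairing of the cycles `v_{α,−β} = Ω(e_α − e_β)` and
`v_{α,β} = Ω(e_α + e_β)` equals `2·Ω_{α,β} = ±2`; here
`ω(Ωu, Ωv) = uᵀ Ω v`. -/
theorem transposition_pairing {A : Type*} [Fintype A] [DecidableEq A]
    (d : ℕ) (π₀ π₁ : A ≃ Fin d)
    (hinv : ∀ a, π₀.symm (π₁ (π₀.symm (π₁ a))) = a)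
    (α β : A) (hne : α ≠ β) (hswap : π₀.symm (π₁ α) = β) :
    let Ω : Matrix A A ℝ := Matrix.of fun a b =>
      (if (π₁ a).val ≤ (π₁ b).val then 1 else 0) -
      (if (π₀ a).val ≤ (π₀ b).val then 1 else 0)
    let e : A → (A → ℝ) := fun a => Pi.single a 1
    (e α - e β) ⬝ᵥ Ω.mulVec (e α + e β) = 2 * Ω α β ∧ (Ω α β = 1 ∨ Ω α β = -1) := by
  intro Ω e
  have hα : π₁ α = π₀ β := (Equiv.symm_apply_eq _).1 hswap
  have hβ : π₁ β = π₀ α := (Equiv.symm_apply_eq _).1 (hswap ▸ hinv α)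
  have hdiag (a : A) : Ω a a = 0 := by simp [Ω]
  have hanti : Ω β α = -Ω α β := by simp only [Ω, of_apply, hα, hβ]; ring
  refine ⟨?_, ?_⟩
  · rw [single_sub_single_dotProduct_mulVec_single_add_single, hdiag, hdiag, hanti]
    ring
  · simp only [Ω, of_apply, hα, hβ]
    exact ite_le_sub_ite_le_eq_one_or_neg_one (Fin.val_ne_of_ne (π₀.injective.ne hne))
end

section
/- Let π be a self-inverse irreducible permutation of {1,…,d} (π = π⁻¹), with intersection matrix Ω_π defined by (Ω_π)_{i,j} = 1 if i < j and π(i) > π(j), −1 if i > j and π(i) < π(j), 0 otherwise. Let V be the span in ℝ^d of the vectors Ω_π e_B as B ranges over the orbits of π on {1,…,d} (all of size 1 or 2, where e_B = Σ_{i∈B} e_i). Then V is a Lagrangian subspace of the symplectic space H = Ω_π ℝ^d with the form ω(Ω_π u, Ω_π v) = uᵀ Ω_π v; in particular dim V = (rank Ω_π)/2. -/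
open Matrix

/-- The intersection matrix `Ω_π` of a permutation, over `ℝ`. -/
def OmegaR (d : ℕ) (π : Equiv.Perm (Fin d)) : Matrix (Fin d) (Fin d) ℝ :=
  Matrix.of fun i j => if i < j ∧ π j < π i then 1 else if j < i ∧ π i < π j then -1 else 0

/-! The permutation matrix `P` of the involution `π` anticommutes with `Ω` (`PΩP = -Ω`), so both
eigenspaces `E₊ = {u | u ∘ π = u}` and `E₋ = {u | u ∘ π = -u}` are isotropic for `(u, v) ↦ uᵀΩv`,
and `E₊` is spanned by the orbit indicators `e_B`. Thus `V = ΩE₊` and `ΩE₋` are isotropic subspaces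
of `H` with `V + ΩE₋ = H`. An isotropic subspace of `H` has dimension at most `(dim H)/2`, so both
have dimension exactly `(dim H)/2`, which makes `V` Lagrangian. -/

open Module Module.End Submodule LinearMap

section Finrank

variable {K V W : Type*} [Field K] [AddCommGroup V] [Module K V] [FiniteDimensional K V]
  [AddCommGroup W] [Module K W]

theorem Submodule.finrank_map_add_finrank_ker_of_ker_le (f : V →ₗ[K] W) {T : Submodule K V}
    (h : ker f ≤ T) : finrank K (T.map f) + finrank K (ker f) = finrank K T := by
  have hT := (f.comp T.subtype).finrank_range_add_finrank_ker
  rwa [range_comp, range_subtype, ker_comp,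
    (comapSubtypeEquivOfLe h).finrank_eq] at hT

end Finrank

theorem Module.End.eigenspace_one_sup_eigenspace_neg_one {K M : Type*} [Field K] [NeZero (2 : K)]
    [AddCommGroup M] [Module K M] {T : Module.End K M} (hT : T * T = 1) :
    eigenspace T 1 ⊔ eigenspace T (-1) = ⊤ := by
  have hTT (x : M) : T (T x) = x := LinearMap.congr_fun hT x
  refine eq_top_iff.mpr fun x _ => ?_
  have hplus : x + T x ∈ eigenspace T 1 := by
    rw [mem_eigenspace_iff, map_add, hTT, one_smul, add_comm]
  have hminus : x - T x ∈ eigenspace T (-1) := by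
    rw [mem_eigenspace_iff, map_sub, hTT, neg_one_smul, neg_sub]
  have hx : x = (2⁻¹ : K) • (x + T x) + (2⁻¹ : K) • (x - T x) := by
    rw [← smul_add, add_add_sub_cancel, ← two_smul K x, smul_smul,
      inv_mul_cancel₀ two_ne_zero, one_smul]
  rw [hx]
  exact add_mem_sup (smul_mem _ _ hplus) (smul_mem _ _ hminus)

namespace Matrix

variable {K n : Type*} [Field K] [Fintype n]

theorem dotProductBilin_nondegenerate :
    (dotProductBilin K K : LinearMap.BilinForm K (n → K)).Nondegenerate :=
  ⟨fun u hu => dotProduct_eq_zero u hu,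
    fun v hv => dotProduct_eq_zero v fun u => by rw [dotProduct_comm]; exact hv u⟩

variable {A : Matrix n n K}

theorem mulVec_dotProduct_of_transpose_eq_neg (hA : Aᵀ = -A) (u v : n → K) :
    A *ᵥ u ⬝ᵥ v = -(u ⬝ᵥ A *ᵥ v) := by
  rw [dotProduct_comm, dotProduct_mulVec, ← mulVec_transpose, hA, neg_mulVec, neg_dotProduct,
    dotProduct_comm]

theorem ker_mulVecLin_le_orthogonal (hA : Aᵀ = -A) {V : Submodule K (n → K)}
    (hV : V ≤ range A.mulVecLin) :
    ker A.mulVecLin ≤ BilinForm.orthogonal (dotProductBilin K K) V := by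
  intro w (hw : A *ᵥ w = 0) v hv
  obtain ⟨u, rfl⟩ := hV hv
  simp [mulVec_dotProduct_of_transpose_eq_neg hA, hw]

/- For `V ⊆ H = range A`, the `ω`-orthogonal of `V` inside `H` is `A (Vᗮ)`, where `ᗮ` is the
orthogonal for the dot product. -/
theorem finrank_map_orthogonal_add_finrank (hA : Aᵀ = -A) {V : Submodule K (n → K)}
    (hV : V ≤ range A.mulVecLin) :
    finrank K ((BilinForm.orthogonal (dotProductBilin K K) V).map A.mulVecLin) + finrank K V =
      A.rank := by
  have hker :=
    finrank_map_add_finrank_ker_of_ker_le A.mulVecLin (ker_mulVecLin_le_orthogonal hA hV)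
  have hperp := BilinForm.finrank_orthogonal dotProductBilin_nondegenerate V
  have hrank := A.mulVecLin.finrank_range_add_finrank_ker
  have hV' := Submodule.finrank_le V
  simp only [Module.finrank_fintype_fun_eq_card] at hperp hrank hV'
  rw [Matrix.rank]
  omega

theorem mem_map_orthogonal_iff (hA : Aᵀ = -A) {V : Submodule K (n → K)}
    (hV : V ≤ range A.mulVecLin) (x : n → K) :
    x ∈ (BilinForm.orthogonal (dotProductBilin K K) V).map A.mulVecLin ↔
      (∃ u, A *ᵥ u = x) ∧ ∀ u, A *ᵥ u ∈ V → u ⬝ᵥ x = 0 := by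
  constructor
  · rintro ⟨w, hw, rfl⟩
    refine ⟨⟨w, rfl⟩, fun u hu => ?_⟩
    have h : A *ᵥ u ⬝ᵥ w = 0 := hw _ hu
    rwa [mulVec_dotProduct_of_transpose_eq_neg hA, neg_eq_zero] at h
  · rintro ⟨⟨w, rfl⟩, hx⟩
    refine ⟨w, fun v hv => ?_, rfl⟩
    obtain ⟨u, rfl⟩ := hV hv
    show A *ᵥ u ⬝ᵥ w = 0
    rw [mulVec_dotProduct_of_transpose_eq_neg hA, hx u hv, neg_zero]

theorem map_le_map_orthogonal_of_isotropic (hA : Aᵀ = -A) {U : Submodule K (n → K)}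
    (hU : ∀ u ∈ U, ∀ v ∈ U, u ⬝ᵥ A *ᵥ v = 0) :
    U.map A.mulVecLin ≤
      (BilinForm.orthogonal (dotProductBilin K K) (U.map A.mulVecLin)).map A.mulVecLin := by
  refine map_mono fun u hu => ?_
  rintro _ ⟨v, hv, rfl⟩
  show A *ᵥ v ⬝ᵥ u = 0
  rw [mulVec_dotProduct_of_transpose_eq_neg hA, hU v hv u hu, neg_zero]

theorem map_eq_map_orthogonal_of_isotropic_of_sup_eq_top (hA : Aᵀ = -A)
    {U₁ U₂ : Submodule K (n → K)} (hsup : U₁ ⊔ U₂ = ⊤)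
    (h₁ : ∀ u ∈ U₁, ∀ v ∈ U₁, u ⬝ᵥ A *ᵥ v = 0) (h₂ : ∀ u ∈ U₂, ∀ v ∈ U₂, u ⬝ᵥ A *ᵥ v = 0) :
    (BilinForm.orthogonal (dotProductBilin K K) (U₁.map A.mulVecLin)).map A.mulVecLin =
        U₁.map A.mulVecLin ∧
      2 * finrank K (U₁.map A.mulVecLin) = A.rank := by
  have hle₁ := map_le_map_orthogonal_of_isotropic hA h₁
  have hle₂ := map_le_map_orthogonal_of_isotropic hA h₂
  have hdim₁ := finrank_map_orthogonal_add_finrank hA (map_le_range (p := U₁))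
  have hdim₂ := finrank_map_orthogonal_add_finrank hA (map_le_range (p := U₂))
  have hcover : A.rank ≤ finrank K (U₁.map A.mulVecLin) + finrank K (U₂.map A.mulVecLin) := by
    rw [Matrix.rank, ← Submodule.map_top, ← hsup, Submodule.map_sup]
    exact Submodule.finrank_add_le_finrank_add_finrank _ _
  have hm₁ := Submodule.finrank_mono hle₁
  have hm₂ := Submodule.finrank_mono hle₂
  exact ⟨(eq_of_le_of_finrank_le hle₁ (by omega)).symm, by omega⟩

theorem dotProduct_mulVec_eq_zero_of_submatrix_eq_neg [NeZero (2 : K)] {σ : Equiv.Perm n}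
    (hA : A.submatrix σ σ = -A) {ε : K} (hε : ε * ε = 1) {u v : n → K}
    (hu : u ∈ eigenspace (funLeft K K σ) ε) (hv : v ∈ eigenspace (funLeft K K σ) ε) :
    u ⬝ᵥ A *ᵥ v = 0 := by
  have hu : u ∘ σ = ε • u := mem_eigenspace_iff.mp hu
  have hv : v ∘ σ = ε • v := mem_eigenspace_iff.mp hv
  have hAv : (A *ᵥ v) ∘ σ = -(ε • A *ᵥ v) := by
    have h := submatrix_mulVec_equiv A (v ∘ σ) σ σ
    rwa [Function.comp_assoc, Equiv.self_comp_symm, Function.comp_id, hA, hv, neg_mulVec,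
      mulVec_smul, eq_comm] at h
  have hneg : u ⬝ᵥ A *ᵥ v = -(u ⬝ᵥ A *ᵥ v) := by
    conv_lhs => rw [← comp_equiv_dotProduct_comp_equiv u (A *ᵥ v) σ]
    rw [hu, hAv, dotProduct_neg, smul_dotProduct, dotProduct_smul, smul_smul, hε, one_smul]
  have h2 : 2 * (u ⬝ᵥ A *ᵥ v) = 0 := by rw [two_mul]; nth_rw 1 [hneg]; exact neg_add_cancel _
  exact (mul_eq_zero.mp h2).resolve_left two_ne_zero

end Matrix

namespace Equiv.Perm

variable {ι : Type*} [Fintype ι] (σ : Perm ι)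

theorem apply_eq_of_sameCycle {α : Type*} {u : ι → α} (hu : u ∘ σ = u) {i j : ι}
    (h : σ.SameCycle i j) : u i = u j := by
  obtain ⟨k, -, rfl⟩ := h.exists_nat_pow_eq
  clear h
  induction k with
  | zero => rfl
  | succ k ih => rw [ih, pow_succ', mul_apply]; exact (congrFun hu _).symm

variable (K : Type*) [Field K] [DecidableRel σ.SameCycle]

def cycleIndicator (i : ι) : ι → K := fun j => if σ.SameCycle i j then 1 else 0

theorem span_range_cycleIndicator [CharZero K] :
    span K (Set.range (σ.cycleIndicator K)) = eigenspace (funLeft K K σ) 1 := by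
  refine le_antisymm (span_le.mpr ?_) fun u hu => ?_
  · rintro _ ⟨i, rfl⟩
    rw [SetLike.mem_coe, mem_eigenspace_iff, one_smul]
    funext j
    simp [cycleIndicator, funLeft_apply, sameCycle_apply_right]
  · have hu : u ∘ σ = u := by rwa [mem_eigenspace_iff, one_smul] at hu
    set c : ι → K := fun i => (Finset.univ.filter (σ.SameCycle i)).card
    have hc : ∀ {i j}, σ.SameCycle i j → c i = c j := fun h => by
      simp only [c]
      congr 2
      ext k
      simp only [Finset.mem_filter, Finset.mem_univ, true_and]
      exact ⟨h.symm.trans, h.trans⟩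
    have hcj : ∀ j, c j ≠ 0 := fun j => Nat.cast_ne_zero.mpr
      (Finset.card_ne_zero.mpr ⟨j, Finset.mem_filter.mpr ⟨Finset.mem_univ _, SameCycle.refl _ _⟩⟩)
    have hsum : u = ∑ i, (u i / c i) • σ.cycleIndicator K i := by
      funext j
      have hcard : ((Finset.univ.filter (σ.SameCycle · j)).card : K) = c j := by
        simp only [c]
        congr 2
        ext k
        simp [sameCycle_comm]
      simp only [Finset.sum_apply, Pi.smul_apply, cycleIndicator, smul_eq_mul, mul_ite, mul_one,
        mul_zero, Finset.sum_ite, Finset.sum_const_zero, add_zero]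
      rw [Finset.sum_congr rfl fun i hi => by
          rw [apply_eq_of_sameCycle σ hu (Finset.mem_filter.mp hi).2,
            hc (Finset.mem_filter.mp hi).2],
        Finset.sum_const, nsmul_eq_mul, hcard, mul_div_cancel₀ _ (hcj j)]
    rw [hsum]
    exact sum_mem fun i _ => smul_mem _ _ (subset_span ⟨i, rfl⟩)

theorem setOf_finset_sameCycle_eq_image [DecidableEq ι] {β : Type*} (f : (ι → K) → β) :
    {x | ∃ B : Finset ι, (∃ i, ∀ j, j ∈ B ↔ σ.SameCycle i j) ∧
        x = f (fun j => if j ∈ B then 1 else 0)} = f '' Set.range (σ.cycleIndicator K) := by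
  ext x
  constructor
  · rintro ⟨B, ⟨i, hB⟩, rfl⟩
    exact ⟨_, ⟨i, rfl⟩, congrArg f (funext fun j => by simp [cycleIndicator, hB j])⟩
  · rintro ⟨_, ⟨i, rfl⟩, rfl⟩
    exact ⟨Finset.univ.filter (σ.SameCycle i), ⟨i, by simp⟩,
      congrArg f (funext fun j => by simp [cycleIndicator])⟩

end Equiv.Perm

theorem OmegaR_transpose (d : ℕ) (π : Equiv.Perm (Fin d)) : (OmegaR d π)ᵀ = -OmegaR d π := by
  ext i j
  simp only [OmegaR, transpose_apply, Matrix.neg_apply, of_apply]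
  split_ifs <;> first | omega | norm_num

theorem OmegaR_submatrix_self {d : ℕ} {π : Equiv.Perm (Fin d)} (hπ : Function.Involutive π) :
    (OmegaR d π).submatrix π π = -OmegaR d π := by
  ext i j
  simp only [OmegaR, submatrix_apply, Matrix.neg_apply, of_apply, hπ i, hπ j]
  split_ifs <;> first | omega | norm_num

theorem self_inverse_lagrangian_general (d : ℕ) (π : Equiv.Perm (Fin d))
    (hself : π⁻¹ = π) :
    let Ω := OmegaR d π
    let V : Submodule ℝ (Fin d → ℝ) := Submodule.span ℝ
      {x | ∃ B : Finset (Fin d), (∃ i : Fin d, ∀ j, j ∈ B ↔ π.SameCycle i j) ∧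
        x = Ω.mulVec (fun j => if j ∈ B then (1 : ℝ) else 0)}
    (∀ x : Fin d → ℝ,
      x ∈ V ↔ ((∃ u, Ω.mulVec u = x) ∧ ∀ u : Fin d → ℝ, Ω.mulVec u ∈ V → u ⬝ᵥ x = 0)) ∧
    2 * Module.finrank ℝ ↥V = Ω.rank := by
  intro Ω V
  have hπ : Function.Involutive π := fun i => by
    nth_rw 1 [← hself]; exact π.symm_apply_apply i
  have hΩ : Ωᵀ = -Ω := OmegaR_transpose d π
  have hV : V = (eigenspace (funLeft ℝ ℝ π) 1).map Ω.mulVecLin := by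
    rw [← π.span_range_cycleIndicator ℝ, Submodule.map_span, ← π.setOf_finset_sameCycle_eq_image]
    rfl
  have hT : funLeft ℝ ℝ π * funLeft ℝ ℝ π = 1 :=
    LinearMap.ext fun u => funext fun i => congrArg u (hπ i)
  have hiso {ε : ℝ} (hε : ε * ε = 1) :
      ∀ u ∈ eigenspace (funLeft ℝ ℝ π) ε, ∀ v ∈ eigenspace (funLeft ℝ ℝ π) ε, u ⬝ᵥ Ω *ᵥ v = 0 :=
    fun _ hu _ hv =>
      dotProduct_mulVec_eq_zero_of_submatrix_eq_neg (OmegaR_submatrix_self hπ) hε hu hv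
  obtain ⟨hlag, hdim⟩ := map_eq_map_orthogonal_of_isotropic_of_sup_eq_top hΩ
    (eigenspace_one_sup_eigenspace_neg_one hT) (hiso (one_mul 1)) (hiso (by norm_num))
  rw [hV]
  refine ⟨fun x => ?_, hdim⟩
  rw [← mem_map_orthogonal_iff hΩ map_le_range, hlag]

/-- If `π` is a self-inverse irreducible permutation, then the span `V` of
the vertical cycles `Ω_π e_B` (over the orbits `B` of `π`) is a Lagrangian
subspace of `H = Ω_π ℝ^d` for the symplectic form `ω(Ωu, Ωv) = uᵀΩv`:
`V` consists exactly of the `x ∈ H` pairing to zero with all of `V`, and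
`dim V = (rank Ω_π)/2`. -/
theorem self_inverse_lagrangian (d : ℕ) (hd : 2 ≤ d) (π : Equiv.Perm (Fin d))
    (hirr : ∀ k : ℕ, 1 ≤ k → k < d → ¬ (∀ i : Fin d, i.val < k → (π i).val < k))
    (hself : π⁻¹ = π) :
    let Ω := OmegaR d π
    let V : Submodule ℝ (Fin d → ℝ) := Submodule.span ℝ
      {x | ∃ B : Finset (Fin d), (∃ i : Fin d, ∀ j, j ∈ B ↔ π.SameCycle i j) ∧
        x = Ω.mulVec (fun j => if j ∈ B then (1 : ℝ) else 0)}
    (∀ x : Fin d → ℝ,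
      x ∈ V ↔ ((∃ u, Ω.mulVec u = x) ∧ ∀ u : Fin d → ℝ, Ω.mulVec u ∈ V → u ⬝ᵥ x = 0)) ∧
    2 * Module.finrank ℝ ↥V = Ω.rank :=
  self_inverse_lagrangian_general d π hself
end

section
/- Every self-inverse irreducible permutation π of {1,…,d} has at least (rank Ω_π)/2 transpositions, i.e. at least that many 2-element orbits on {1,…,d}. -/
open Finset Function Module

lemma finrank_range_le_add_of_ker_inf_le {K V W₁ W₂ W₃ : Type*} [Field K]
    [AddCommGroup V] [Module K V] [FiniteDimensional K V]
    [AddCommGroup W₁] [Module K W₁] [AddCommGroup W₂] [Module K W₂]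
    [AddCommGroup W₃] [Module K W₃]
    {f : V →ₗ[K] W₁} {g : V →ₗ[K] W₂} {A : V →ₗ[K] W₃}
    (h : LinearMap.ker f ⊓ LinearMap.ker g ≤ LinearMap.ker A) :
    finrank K (LinearMap.range A) ≤
      finrank K (LinearMap.range f) + finrank K (LinearMap.range g) := by
  have hf := LinearMap.finrank_range_add_finrank_ker f
  have hg := LinearMap.finrank_range_add_finrank_ker g
  have hA := LinearMap.finrank_range_add_finrank_ker A
  have hsup := Submodule.finrank_sup_add_finrank_inf_eq (LinearMap.ker f) (LinearMap.ker g)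
  have hsup_le := Submodule.finrank_le (LinearMap.ker f ⊔ LinearMap.ker g)
  have hinf_le := Submodule.finrank_mono h
  omega

section

variable {ι : Type*} {σ : Equiv.Perm ι} (K : Type*) [Field K]

def antiInvariant (σ : Equiv.Perm ι) : Submodule K (ι → K) :=
  LinearMap.ker (LinearMap.funLeft K K σ + LinearMap.id)

variable {K}

lemma mem_antiInvariant {u : ι → K} : u ∈ antiInvariant K σ ↔ ∀ i, u (σ i) + u i = 0 := by
  simp [antiInvariant, funext_iff]

lemma range_id_sub_funLeft_le_antiInvariant (hσ : Involutive σ) :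
    LinearMap.range (LinearMap.id - LinearMap.funLeft K K σ) ≤ antiInvariant K σ := by
  rintro _ ⟨v, rfl⟩
  refine mem_antiInvariant.2 fun i => ?_
  simp only [LinearMap.sub_apply, LinearMap.id_apply, LinearMap.funLeft_apply, Pi.sub_apply,
    hσ i]
  ring

variable [LinearOrder ι]

lemma ncard_transpositions_eq_card_filter_lt [Fintype ι] (hσ : Involutive σ) :
    Set.ncard {B : Finset ι | ∃ i, σ i ≠ i ∧ B = {i, σ i}} = #{i | i < σ i} := by
  have hset : {B : Finset ι | ∃ i, σ i ≠ i ∧ B = {i, σ i}} =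
      ↑(({i | i < σ i} : Finset ι).image fun i => ({i, σ i} : Finset ι)) := by
    ext B
    simp only [Set.mem_ofPred_eq, coe_image, coe_filter, mem_univ, true_and, Set.mem_image]
    constructor
    · rintro ⟨i, hne, rfl⟩
      rcases hne.lt_or_gt with hlt | hgt
      · exact ⟨σ i, by rwa [hσ i], by rw [hσ i, pair_comm]⟩
      · exact ⟨i, hgt, rfl⟩
    · rintro ⟨i, hi, rfl⟩
      exact ⟨i, hi.ne', rfl⟩
  rw [hset, Set.ncard_coe_finset]
  refine card_image_of_injOn fun i hi j hj hij => ?_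
  simp only [coe_filter, mem_univ, true_and, Set.mem_ofPred_eq] at hi hj
  have hmem : i ∈ ({j, σ j} : Finset ι) := hij ▸ mem_insert_self i {σ i}
  rcases mem_insert.1 hmem with rfl | hi_eq
  · rfl
  · rw [mem_singleton.1 hi_eq, hσ j] at hi
    exact absurd hi (asymm (mem_singleton.1 hi_eq ▸ hj))

lemma finrank_antiInvariant_le [Fintype ι] [CharZero K] (hσ : Involutive σ) :
    finrank K (antiInvariant K σ) ≤ #{i | i < σ i} := by
  let N : Finset ι := {i | i < σ i}
  let restrict := (LinearMap.funLeft K K (Subtype.val : N → ι)).comp (antiInvariant K σ).subtype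
  suffices hinj : Injective restrict by
    simpa only [finrank_pi, Fintype.card_coe] using LinearMap.finrank_le_finrank_of_injective hinj
  rw [← LinearMap.ker_eq_bot, Submodule.eq_bot_iff]
  rintro ⟨u, hu⟩ hrestrict
  have hzero : ∀ i, i < σ i → u i = 0 := fun i hi => by
    simpa [restrict] using congrFun hrestrict ⟨i, by simpa [N] using hi⟩
  have hanti := mem_antiInvariant.1 hu
  ext i
  show u i = 0
  rcases lt_trichotomy i (σ i) with hlt | heq | hgt
  · exact hzero i hlt
  · have := hanti i
    rw [← heq] at this
    exact add_self_eq_zero.1 this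
  · have := hanti (σ i)
    rwa [hσ i, hzero (σ i) (by rwa [hσ i]), add_zero] at this

variable (K) in
def partialSum [Fintype ι] : (ι → K) →ₗ[K] (ι → K) where
  toFun v i := ∑ j with j < i, v j
  map_add' u v := by
    ext i
    simp only [Pi.add_apply, sum_add_distrib]
  map_smul' c v := by
    ext i
    simp only [Pi.smul_apply, smul_eq_mul, mul_sum, RingHom.id_apply]

lemma partialSum_apply [Fintype ι] (v : ι → K) (i : ι) :
    partialSum K v i = ∑ j with j < i, v j := rfl

end

lemma OmegaR_apply_eq_sub (d : ℕ) (π : Equiv.Perm (Fin d)) (i j : Fin d) :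
    OmegaR d π i j = (if π j < π i then 1 else 0) - (if j < i then 1 else 0) := by
  simp only [OmegaR, Matrix.of_apply]
  rcases lt_trichotomy i j with h | rfl | h
  · by_cases h' : π j < π i <;> simp [h, asymm h, h']
  · simp
  · have hne : π i ≠ π j := π.injective.ne h.ne'
    rcases hne.lt_or_gt with h' | h' <;> simp [h, asymm h, h', asymm h']

lemma OmegaR_mulVec_of_comp_eq {d : ℕ} (π : Equiv.Perm (Fin d)) {v : Fin d → ℝ}
    (hv : v ∘ π = v) :
    (OmegaR d π).mulVec v = LinearMap.funLeft ℝ ℝ π (partialSum ℝ v) - partialSum ℝ v := by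
  ext i
  have hreindex : (∑ j, if π j < π i then v j else 0) = ∑ k, if k < π i then v k else 0 := by
    refine Fintype.sum_equiv π _ _ fun j => ?_
    simp only [← congrFun hv j, comp_apply]
  simp only [Matrix.mulVec, dotProduct, OmegaR_apply_eq_sub, sub_mul, ite_mul, one_mul,
    zero_mul, sum_sub_distrib, hreindex, Pi.sub_apply, LinearMap.funLeft_apply,
    partialSum_apply, sum_filter]

lemma ker_inf_ker_le_ker_OmegaR {d : ℕ} (π : Equiv.Perm (Fin d)) :
    LinearMap.ker (LinearMap.id - LinearMap.funLeft ℝ ℝ π) ⊓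
        LinearMap.ker ((LinearMap.id - LinearMap.funLeft ℝ ℝ π) ∘ₗ partialSum ℝ) ≤
      LinearMap.ker (OmegaR d π).mulVecLin := by
  rintro v ⟨hv, hSv⟩
  simp only [SetLike.mem_coe, LinearMap.mem_ker, LinearMap.comp_apply, LinearMap.sub_apply,
    LinearMap.id_apply, sub_eq_zero] at hv hSv ⊢
  rw [Matrix.mulVecLin_apply, OmegaR_mulVec_of_comp_eq π hv.symm, ← hSv, sub_self]

theorem self_inverse_transposition_count_general (d : ℕ) (π : Equiv.Perm (Fin d))
    (hself : π⁻¹ = π) :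
    (OmegaR d π).rank ≤
      2 * Set.ncard {B : Finset (Fin d) | ∃ i, π i ≠ i ∧ B = {i, π i}} := by
  have hπ : Involutive π := fun i => by nth_rw 1 [← hself]; exact π.symm_apply_apply i
  set L := LinearMap.id - LinearMap.funLeft ℝ ℝ π
  have hL : LinearMap.range L ≤ antiInvariant ℝ π := range_id_sub_funLeft_le_antiInvariant hπ
  have hLS : LinearMap.range (L ∘ₗ partialSum ℝ) ≤ antiInvariant ℝ π :=
    (LinearMap.range_comp_le_range _ _).trans hL
  rw [ncard_transpositions_eq_card_filter_lt hπ]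
  calc (OmegaR d π).rank
      ≤ finrank ℝ (LinearMap.range L) + finrank ℝ (LinearMap.range (L ∘ₗ partialSum ℝ)) :=
        finrank_range_le_add_of_ker_inf_le (ker_inf_ker_le_ker_OmegaR π)
    _ ≤ 2 * finrank ℝ (antiInvariant ℝ π) := by
        have := Submodule.finrank_mono hL
        have := Submodule.finrank_mono hLS
        omega
    _ ≤ 2 * #{i | i < π i} := by
        gcongr
        exact finrank_antiInvariant_le hπ

/-- A self-inverse irreducible permutation has at least `(rank Ω_π)/2`
transpositions (2-element orbits). -/
theorem self_inverse_transposition_count (d : ℕ) (hd : 2 ≤ d) (π : Equiv.Perm (Fin d))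
    (hirr : ∀ k : ℕ, 1 ≤ k → k < d → ¬ (∀ i : Fin d, i.val < k → (π i).val < k))
    (hself : π⁻¹ = π) :
    (OmegaR d π).rank ≤
      2 * Set.ncard {B : Finset (Fin d) | ∃ i, π i ≠ i ∧ B = {i, π i}} :=
  self_inverse_transposition_count_general d π hself
end
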